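/- arXiv:2403.03498 — 8 statements merged into one kernel-verified Lean document; each statement's English description precedes it below -/
import Mathlib

section
/- For any positive integers N and k with k ≥ 1, the harmonic-type sum ∑_{0<m<N} 1/m^k equals ∑_{0<n_1≤n_2≤⋯≤n_k<N} 1/((N-n_1)·n_2⋯n_k). (This is the depth-one case of the Maesaka–Seki–Watanabe formula.) -/
/-!
Write `Z(N, k) = ∑_{0<m<N} 1/m^k` and `F_N(M, j) = flat1 N M j`, and induct on `N`.
At depth one, `F_{N+1}(n+1, 1) - F_N(n+1, 1)` telescopes to `1/N - 1/(N-n)`, and since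
`1/n · (1/N - 1/(N-n)) = -1/N · 1/(N-n)` this propagates to
`F_{N+1}(M, j+2) = F_N(M, j+2) - F_N(M, j+1)/N` for `M ≤ N`. Splitting off the top index
`n_{j+2} = N` in `F_{N+1}(N+1, j+2)` adds `F_{N+1}(N+1, j+1)/N`, and by induction the two
corrections combine to `(Z(N+1, j+1) - Z(N, j+1))/N = 1/N^{j+2}`, the new term of `Z(N+1, j+2)`.
The case `k = 1` is the reflection `m ↦ N - m` of the harmonic sum.
-/

/-- `flat1 N M j` is the depth-one ♭-sum `∑_{0<n₁≤⋯≤n_j<M} 1/((N-n₁)·n₂⋯n_j)`, built by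
summing over the top variable `n_j < M` first (the bottom variable carries `1/(N-n₁)`). -/
def flat1 (N : ℕ) : ℕ → ℕ → ℚ
  | _, 0 => 1
  | M, 1 => ∑ n ∈ Finset.Ioo 0 M, 1 / ((N : ℚ) - (n : ℚ))
  | M, (j+2) => ∑ n ∈ Finset.Ioo 0 M, (1 / (n : ℚ)) * flat1 N (n+1) (j+1)
  termination_by _ j => j

open Finset

lemma sum_Ioo_zero_succ {f : ℕ → ℚ} {M : ℕ} (hM : 0 < M) :
    ∑ n ∈ Ioo 0 (M + 1), f n = ∑ n ∈ Ioo 0 M, f n + f M := by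
  rw [← Order.succ_eq_add_one, Ioo_succ_right_eq_Ioc, ← Ioo_insert_right hM, sum_insert (by simp),
    add_comm]

lemma Ioo_zero_eq_empty {M : ℕ} (hM : M ≤ 1) : Ioo 0 M = ∅ := by
  ext n
  simp only [mem_Ioo, notMem_empty, iff_false]
  omega

lemma flat1_one (N M : ℕ) : flat1 N M 1 = ∑ n ∈ Ioo 0 M, 1 / ((N : ℚ) - n) := by
  rw [flat1]

lemma flat1_add_two (N M j : ℕ) :
    flat1 N M (j + 2) = ∑ n ∈ Ioo 0 M, 1 / (n : ℚ) * flat1 N (n + 1) (j + 1) := by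
  rw [flat1]

lemma flat1_eq_zero_of_le_one (N j : ℕ) {M : ℕ} (hM : M ≤ 1) : flat1 N M (j + 1) = 0 := by
  cases j <;> simp [flat1_one, flat1_add_two, Ioo_zero_eq_empty hM]

lemma flat1_succ_right_add_two (N j : ℕ) {M : ℕ} (hM : 0 < M) :
    flat1 N (M + 1) (j + 2) = flat1 N M (j + 2) + 1 / (M : ℚ) * flat1 N (M + 1) (j + 1) := by
  rw [flat1_add_two, flat1_add_two, sum_Ioo_zero_succ hM]

lemma flat1_succ_left_one {N n : ℕ} (hn : n < N) :
    flat1 (N + 1) (n + 1) 1 = flat1 N (n + 1) 1 + 1 / (N : ℚ) - 1 / ((N : ℚ) - n) := by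
  induction n with
  | zero => simp [flat1_one, Ioo_zero_eq_empty le_rfl]
  | succ n ih =>
    have hnN : (n : ℚ) + 1 < N := by exact_mod_cast hn
    rw [flat1_one, flat1_one, sum_Ioo_zero_succ n.succ_pos, sum_Ioo_zero_succ n.succ_pos,
      ← flat1_one, ← flat1_one, ih (by omega)]
    field_simp [(by linarith : (N : ℚ) - n ≠ 0), (by linarith : (N : ℚ) - (n + 1) ≠ 0)]
    push_cast
    ring

lemma flat1_succ_left_add_two (j : ℕ) {N M : ℕ} (hM : M ≤ N) :
    flat1 (N + 1) M (j + 2) = flat1 N M (j + 2) - 1 / (N : ℚ) * flat1 N M (j + 1) := by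
  induction j generalizing M with
  | zero =>
    rw [flat1_add_two, flat1_add_two, flat1_one, mul_sum, ← sum_sub_distrib]
    refine sum_congr rfl fun n hn => ?_
    obtain ⟨hn0, hnM⟩ := mem_Ioo.mp hn
    have hnN : (n : ℚ) < N := by exact_mod_cast hnM.trans_le hM
    rw [flat1_succ_left_one (by omega)]
    field_simp [(by positivity : (n : ℚ) ≠ 0), (by linarith : (N : ℚ) ≠ 0),
      (by linarith : (N : ℚ) - n ≠ 0)]
    ring
  | succ j ih =>
    rw [flat1_add_two, flat1_add_two N, flat1_add_two N M j, mul_sum, ← sum_sub_distrib]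
    refine sum_congr rfl fun n hn => ?_
    rw [ih (by have := (mem_Ioo.mp hn).2; omega)]
    ring

lemma sum_one_div_eq_flat1_one (N : ℕ) : ∑ m ∈ Ioo 0 N, 1 / (m : ℚ) = flat1 N N 1 := by
  rw [flat1_one]
  refine sum_nbij' (N - ·) (N - ·) ?_ ?_ ?_ ?_ fun m hm => ?_
  iterate 4 (intro m hm; simp only [mem_Ioo] at hm ⊢; omega)
  rw [Nat.cast_sub (mem_Ioo.mp hm).2.le, sub_sub_cancel]

theorem sum_one_div_pow_eq_flat1 (N j : ℕ) :
    ∑ m ∈ Ioo 0 N, 1 / (m : ℚ) ^ (j + 1) = flat1 N N (j + 1) := by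
  induction N generalizing j with
  | zero => simp [flat1_eq_zero_of_le_one]
  | succ N ih =>
    rcases N.eq_zero_or_pos with rfl | hN
    · simp [Ioo_zero_eq_empty le_rfl, flat1_eq_zero_of_le_one]
    induction j with
    | zero => simpa using sum_one_div_eq_flat1_one (N + 1)
    | succ j ihj =>
      calc ∑ m ∈ Ioo 0 (N + 1), 1 / (m : ℚ) ^ (j + 2)
          = ∑ m ∈ Ioo 0 N, 1 / (m : ℚ) ^ (j + 2) + 1 / (N : ℚ) * (1 / (N : ℚ) ^ (j + 1)) := by
            rw [sum_Ioo_zero_succ hN]; ring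
        _ = flat1 N N (j + 2) - 1 / (N : ℚ) * flat1 N N (j + 1)
              + 1 / (N : ℚ) * flat1 (N + 1) (N + 1) (j + 1) := by
            rw [← ih, ← ih, ← ihj, sum_Ioo_zero_succ hN]; ring
        _ = flat1 (N + 1) (N + 1) (j + 2) := by
            rw [flat1_succ_right_add_two _ _ hN, flat1_succ_left_add_two _ le_rfl]

theorem depth_one_MSW_general (N k : ℕ) (hk : 1 ≤ k) :
    ∑ m ∈ Finset.Ioo 0 N, (1 : ℚ) / (m : ℚ) ^ k = flat1 N N k := by
  obtain ⟨j, rfl⟩ := Nat.exists_eq_add_of_le' hk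
  exact sum_one_div_pow_eq_flat1 N j

/-- Depth-one case of the Maesaka–Seki–Watanabe formula:
`∑_{0<m<N} 1/m^k = ∑_{0<n₁≤⋯≤n_k<N} 1/((N-n₁)·n₂⋯n_k)`. -/
theorem depth_one_MSW (N k : ℕ) (hN : 0 < N) (hk : 1 ≤ k) :
    ∑ m ∈ Finset.Ioo 0 N, (1 : ℚ) / (m : ℚ) ^ k = flat1 N N k :=
  depth_one_MSW_general N k hk
end

section
/- For any positive integer N, ∑_{0<m_1<m_2<N} 1/(m_1 m_2^2) = ∑_{0<n_1<n_2≤n_3<N} 1/((N-n_1)(N-n_2)n_3). (The case ζ_{<N}(1,2) = ζ^♭_{<N}(1,2) of the MSW formula.) -/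
open Finset

/-- Reflection of a sum over an interval. -/
lemma sum_Icc_reflect {N u v : ℕ} (hu : u ≤ N) (hv : v ≤ N) (g : ℕ → ℚ) :
    ∑ c ∈ Finset.Icc u v, g (N - c) = ∑ c ∈ Finset.Icc (N - v) (N - u), g c := by
  refine Finset.sum_nbij' (fun c => N - c) (fun c => N - c) ?_ ?_ ?_ ?_ ?_
  · intro a ha; simp only [Finset.mem_Icc] at *; omega
  · intro a ha; simp only [Finset.mem_Icc] at *; omega
  · intro a ha; simp only [Finset.mem_Icc] at *; omega
  · intro a ha; simp only [Finset.mem_Icc] at *; omega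
  · intro a ha; simp only [Finset.mem_Icc] at *

/-- Triangle swap. -/
lemma triangle_swap (N : ℕ) (f : ℕ → ℕ → ℚ) :
    ∑ b ∈ Finset.Ioo 0 N, ∑ a ∈ Finset.Ioo b N, f b a
      = ∑ a ∈ Finset.Ioo 0 N, ∑ b ∈ Finset.Ioo 0 a, f b a := by
  have h1 : ∀ b ∈ Finset.Ioo 0 N, Finset.Ioo b N = (Finset.Ioo 0 N).filter (fun a => b < a) := by
    intro b hb; ext a; simp only [Finset.mem_Ioo, Finset.mem_filter] at *; omega
  have h2 : ∀ a ∈ Finset.Ioo 0 N, Finset.Ioo 0 a = (Finset.Ioo 0 N).filter (fun b => b < a) := by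
    intro a ha; ext b; simp only [Finset.mem_Ioo, Finset.mem_filter] at *; omega
  calc ∑ b ∈ Finset.Ioo 0 N, ∑ a ∈ Finset.Ioo b N, f b a
      = ∑ b ∈ Finset.Ioo 0 N, ∑ a ∈ Finset.Ioo 0 N, if b < a then f b a else 0 := by
        refine Finset.sum_congr rfl fun b hb => ?_
        rw [h1 b hb, Finset.sum_filter]
    _ = ∑ a ∈ Finset.Ioo 0 N, ∑ b ∈ Finset.Ioo 0 N, if b < a then f b a else 0 :=
        Finset.sum_comm
    _ = ∑ a ∈ Finset.Ioo 0 N, ∑ b ∈ Finset.Ioo 0 a, f b a := by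
        refine Finset.sum_congr rfl fun a ha => ?_
        rw [h2 a ha, Finset.sum_filter]

/-- Swap of the condition `b + c ≥ N`. -/
lemma cond_swap (N : ℕ) (f : ℕ → ℕ → ℚ) :
    ∑ c ∈ Finset.Ioo 0 N, ∑ b ∈ Finset.Icc (N - c) (N - 1), f c b
      = ∑ b ∈ Finset.Ioo 0 N, ∑ c ∈ Finset.Icc (N - b) (N - 1), f c b := by
  have h1 : ∀ c ∈ Finset.Ioo 0 N,
      Finset.Icc (N - c) (N - 1) = (Finset.Ioo 0 N).filter (fun b => N ≤ b + c) := by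
    intro c hc; ext b; simp only [Finset.mem_Ioo, Finset.mem_Icc, Finset.mem_filter] at *; omega
  have h2 : ∀ b ∈ Finset.Ioo 0 N,
      Finset.Icc (N - b) (N - 1) = (Finset.Ioo 0 N).filter (fun c => N ≤ b + c) := by
    intro b hb; ext c; simp only [Finset.mem_Ioo, Finset.mem_Icc, Finset.mem_filter] at *; omega
  calc ∑ c ∈ Finset.Ioo 0 N, ∑ b ∈ Finset.Icc (N - c) (N - 1), f c b
      = ∑ c ∈ Finset.Ioo 0 N, ∑ b ∈ Finset.Ioo 0 N, if N ≤ b + c then f c b else 0 := by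
        refine Finset.sum_congr rfl fun c hc => ?_
        rw [h1 c hc, Finset.sum_filter]
    _ = ∑ b ∈ Finset.Ioo 0 N, ∑ c ∈ Finset.Ioo 0 N, if N ≤ b + c then f c b else 0 :=
        Finset.sum_comm
    _ = ∑ b ∈ Finset.Ioo 0 N, ∑ c ∈ Finset.Icc (N - b) (N - 1), f c b := by
        refine Finset.sum_congr rfl fun b hb => ?_
        rw [h2 b hb, Finset.sum_filter]

def Rsum (N : ℕ) : ℚ :=
  ∑ b ∈ Finset.Ioo 0 N, ∑ a ∈ Finset.Ioo b N, ∑ c ∈ Finset.Icc (N - b) (N - 1),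
    (1 : ℚ) / ((a : ℚ) * (b : ℚ) * (c : ℚ))

def Lsum (N : ℕ) : ℚ :=
  ∑ m₂ ∈ Finset.Ioo 0 N, ∑ m₁ ∈ Finset.Ioo 0 m₂, (1 : ℚ) / ((m₁ : ℚ) * (m₂ : ℚ) ^ 2)

lemma key : ∀ N : ℕ, Rsum N = Lsum N := by
  intro N
  induction N with
  | zero => simp [Rsum, Lsum]
  | succ N ih =>
    rcases Nat.eq_zero_or_pos N with rfl | hN
    · have h : Finset.Ioo 0 1 = (∅ : Finset ℕ) := by
        ext t; simp only [Finset.mem_Ioo, Finset.notMem_empty, iff_false]; omega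
      simp [Rsum, Lsum, h]
    set s := Finset.Ioo 0 N with hs
    have hLtop : Finset.Ioo 0 (N + 1) = insert N (Finset.Ioo 0 N) := by
      ext t; simp only [Finset.mem_Ioo, Finset.mem_insert]; omega
    have hLnm : N ∉ Finset.Ioo 0 N := by simp
    -- the pieces
    set P : ℚ := ∑ b ∈ s, ∑ c ∈ Finset.Icc (N - b) (N - 1),
      (1 : ℚ) / ((N : ℚ) * (b : ℚ) * (c : ℚ)) with hP
    set Q : ℚ := ∑ b ∈ s, (1 : ℚ) / ((N : ℚ) * (N : ℚ) * ((N - b : ℕ) : ℚ)) with hQ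
    set T : ℚ := ∑ b ∈ s, ∑ a ∈ Finset.Ioo b N,
      (1 : ℚ) / ((a : ℚ) * (N : ℚ) * ((N - b : ℕ) : ℚ)) with hT
    set M : ℚ := ∑ m ∈ s, (1 : ℚ) / ((m : ℚ) * (N : ℚ) ^ 2) with hM
    -- L-side step
    have hL : Lsum (N + 1) = M + Lsum N := by
      rw [Lsum, hLtop, Finset.sum_insert hLnm]; rfl
    -- R-side step
    have hsplitc : ∀ b : ℕ, 0 < b → b < N → ∀ h : ℕ → ℚ,
        ∑ c ∈ Finset.Icc (N + 1 - b) N, h c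
          = h N + ((∑ c ∈ Finset.Icc (N - b) (N - 1), h c) - h (N - b)) := by
      intro b hb hbN h
      have e1 : Finset.Icc (N + 1 - b) N = insert N (Finset.Icc (N + 1 - b) (N - 1)) := by
        ext t; simp only [Finset.mem_Icc, Finset.mem_insert]; omega
      have e2 : Finset.Icc (N - b) (N - 1) = insert (N - b) (Finset.Icc (N + 1 - b) (N - 1)) := by
        ext t; simp only [Finset.mem_Icc, Finset.mem_insert]; omega
      rw [e1, Finset.sum_insert (by simp only [Finset.mem_Icc]; omega),
        e2, Finset.sum_insert (by simp only [Finset.mem_Icc]; omega)]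
      ring
    have hpt : ∀ a b : ℕ, 0 < a → 0 < b → b < N →
        (1 : ℚ) / ((a : ℚ) * (b : ℚ) * (N : ℚ))
          - 1 / ((a : ℚ) * (b : ℚ) * ((N - b : ℕ) : ℚ))
        = -(1 / ((a : ℚ) * (N : ℚ) * ((N - b : ℕ) : ℚ))) := by
      intro a b ha hb hbN
      have hc : ((N - b : ℕ) : ℚ) = (N : ℚ) - (b : ℚ) := by
        push_cast [Nat.cast_sub hbN.le]; ring
      have ha' : (a : ℚ) ≠ 0 := Nat.cast_ne_zero.2 ha.ne'
      have hb' : (b : ℚ) ≠ 0 := Nat.cast_ne_zero.2 hb.ne'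
      have hN' : (N : ℚ) ≠ 0 := Nat.cast_ne_zero.2 hN.ne'
      have hnb : (N : ℚ) - (b : ℚ) ≠ 0 := by
        have : (b : ℚ) < (N : ℚ) := by exact_mod_cast hbN
        linarith
      rw [hc]; field_simp; ring
    have h1 : Rsum (N + 1) = (P - Q) + (Rsum N - T) := by
      calc Rsum (N + 1)
          = ∑ b ∈ Finset.Ioo 0 (N + 1), ∑ a ∈ Finset.Ioo b (N + 1),
              ∑ c ∈ Finset.Icc (N + 1 - b) N, (1 : ℚ) / ((a : ℚ) * (b : ℚ) * (c : ℚ)) := by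
            simp only [Rsum, Nat.add_sub_cancel]
        _ = ∑ b ∈ s, ∑ a ∈ Finset.Ioo b (N + 1),
              ∑ c ∈ Finset.Icc (N + 1 - b) N, (1 : ℚ) / ((a : ℚ) * (b : ℚ) * (c : ℚ)) := by
            rw [hLtop, Finset.sum_insert hLnm]
            have : Finset.Ioo N (N + 1) = (∅ : Finset ℕ) := by
              ext t; simp only [Finset.mem_Ioo, Finset.notMem_empty, iff_false]; omega
            rw [this, Finset.sum_empty, zero_add]
        _ = ∑ b ∈ s, ∑ a ∈ Finset.Ioo b (N + 1),
              ((∑ c ∈ Finset.Icc (N - b) (N - 1), (1 : ℚ) / ((a : ℚ) * (b : ℚ) * (c : ℚ)))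
                - 1 / ((a : ℚ) * (N : ℚ) * ((N - b : ℕ) : ℚ))) := by
            refine Finset.sum_congr rfl fun b hb => Finset.sum_congr rfl fun a ha => ?_
            simp only [hs, Finset.mem_Ioo] at hb ha
            rw [hsplitc b hb.1 hb.2 (fun c => (1 : ℚ) / ((a : ℚ) * (b : ℚ) * (c : ℚ)))]
            have := hpt a b (by omega) hb.1 hb.2
            linarith
        _ = ∑ b ∈ s, (((∑ c ∈ Finset.Icc (N - b) (N - 1), (1 : ℚ) / ((N : ℚ) * (b : ℚ) * (c : ℚ)))
                - 1 / ((N : ℚ) * (N : ℚ) * ((N - b : ℕ) : ℚ)))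
              + ∑ a ∈ Finset.Ioo b N,
                ((∑ c ∈ Finset.Icc (N - b) (N - 1), (1 : ℚ) / ((a : ℚ) * (b : ℚ) * (c : ℚ)))
                  - 1 / ((a : ℚ) * (N : ℚ) * ((N - b : ℕ) : ℚ)))) := by
            refine Finset.sum_congr rfl fun b hb => ?_
            simp only [hs, Finset.mem_Ioo] at hb
            have e : Finset.Ioo b (N + 1) = insert N (Finset.Ioo b N) := by
              ext t; simp only [Finset.mem_Ioo, Finset.mem_insert]; omega
            rw [e, Finset.sum_insert (by simp only [Finset.mem_Ioo]; omega)]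
        _ = (P - Q) + (Rsum N - T) := by
            rw [Finset.sum_add_distrib]
            congr 1
            · rw [hP, hQ, Finset.sum_sub_distrib]
            · simp only [Finset.sum_sub_distrib]
              rw [hT, Rsum, ← hs]
    -- the key identity
    have h2 : P = T + Q + M := by
      have step1 : P = ∑ b ∈ s, ∑ f ∈ Finset.Icc 1 b,
          (1 : ℚ) / ((N : ℚ) * (b : ℚ) * ((N - f : ℕ) : ℚ)) := by
        rw [hP]
        refine Finset.sum_congr rfl fun b hb => ?_
        simp only [hs, Finset.mem_Ioo] at hb
        exact (sum_Icc_reflect (by omega) (by omega)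
          (fun c => (1 : ℚ) / ((N : ℚ) * (b : ℚ) * (c : ℚ)))).symm
      have step2 : ∀ b ∈ s, ∑ f ∈ Finset.Icc 1 b,
            (1 : ℚ) / ((N : ℚ) * (b : ℚ) * ((N - f : ℕ) : ℚ))
          = (1 : ℚ) / ((N : ℚ) * (b : ℚ) * ((N - b : ℕ) : ℚ))
            + ∑ f ∈ Finset.Ioo 0 b, (1 : ℚ) / ((N : ℚ) * (b : ℚ) * ((N - f : ℕ) : ℚ)) := by
        intro b hb
        simp only [hs, Finset.mem_Ioo] at hb
        have e : Finset.Icc 1 b = insert b (Finset.Ioo 0 b) := by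
          ext t; simp only [Finset.mem_Icc, Finset.mem_Ioo, Finset.mem_insert]; omega
        rw [e, Finset.sum_insert (by simp only [Finset.mem_Ioo]; omega)]
      calc P = ∑ b ∈ s, ((1 : ℚ) / ((N : ℚ) * (b : ℚ) * ((N - b : ℕ) : ℚ))
              + ∑ f ∈ Finset.Ioo 0 b, (1 : ℚ) / ((N : ℚ) * (b : ℚ) * ((N - f : ℕ) : ℚ))) :=
            step1.trans (Finset.sum_congr rfl step2)
        _ = (∑ b ∈ s, (1 : ℚ) / ((N : ℚ) * (b : ℚ) * ((N - b : ℕ) : ℚ)))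
              + ∑ b ∈ s, ∑ f ∈ Finset.Ioo 0 b,
                  (1 : ℚ) / ((N : ℚ) * (b : ℚ) * ((N - f : ℕ) : ℚ)) :=
            Finset.sum_add_distrib
        _ = (Q + M) + T := by
            congr 1
            · rw [hQ, hM, ← Finset.sum_add_distrib]
              refine Finset.sum_congr rfl fun b hb => ?_
              simp only [hs, Finset.mem_Ioo] at hb
              have hc : ((N - b : ℕ) : ℚ) = (N : ℚ) - (b : ℚ) := by
                push_cast [Nat.cast_sub hb.2.le]; ring
              have hb' : (b : ℚ) ≠ 0 := Nat.cast_ne_zero.2 hb.1.ne'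
              have hN' : (N : ℚ) ≠ 0 := Nat.cast_ne_zero.2 hN.ne'
              have hnb : (N : ℚ) - (b : ℚ) ≠ 0 := by
                have : (b : ℚ) < (N : ℚ) := by exact_mod_cast hb.2
                linarith
              rw [hc]
              field_simp
              ring
            · rw [hT, triangle_swap N
                (fun b a => (1 : ℚ) / ((a : ℚ) * (N : ℚ) * ((N - b : ℕ) : ℚ)))]
              refine Finset.sum_congr rfl fun b hb => Finset.sum_congr rfl fun f hf => ?_
              ring
        _ = T + Q + M := by ring
    rw [h1, hL, ← ih]
    linarith [h2]

lemma rhs_eq (N : ℕ) (hN : 0 < N) :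
    ∑ n₃ ∈ Finset.Ioo 0 N, ∑ n₂ ∈ Finset.Icc 1 n₃, ∑ n₁ ∈ Finset.Ioo 0 n₂,
        (1 : ℚ) / (((N : ℚ) - (n₁ : ℚ)) * ((N : ℚ) - (n₂ : ℚ)) * (n₃ : ℚ)) = Rsum N := by
  have hIccIoo : ∀ b : ℕ, Finset.Icc (b + 1) (N - 1) = Finset.Ioo b N := by
    intro b; ext t; simp only [Finset.mem_Icc, Finset.mem_Ioo]; omega
  calc ∑ n₃ ∈ Finset.Ioo 0 N, ∑ n₂ ∈ Finset.Icc 1 n₃, ∑ n₁ ∈ Finset.Ioo 0 n₂,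
        (1 : ℚ) / (((N : ℚ) - (n₁ : ℚ)) * ((N : ℚ) - (n₂ : ℚ)) * (n₃ : ℚ))
      = ∑ c ∈ Finset.Ioo 0 N, ∑ n₂ ∈ Finset.Icc 1 c,
          (fun (b : ℕ) => ∑ a ∈ Finset.Icc (b + 1) (N - 1),
            (1 : ℚ) / ((a : ℚ) * (b : ℚ) * (c : ℚ))) (N - n₂) := by
        refine Finset.sum_congr rfl fun c hc => Finset.sum_congr rfl fun n₂ hn₂ => ?_
        simp only [Finset.mem_Ioo] at hc
        simp only [Finset.mem_Icc] at hn₂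
        have hc2 : ((N : ℚ) - (n₂ : ℚ)) = ((N - n₂ : ℕ) : ℚ) := by
          push_cast [Nat.cast_sub (by omega : n₂ ≤ N)]; ring
        calc ∑ n₁ ∈ Finset.Ioo 0 n₂,
              (1 : ℚ) / (((N : ℚ) - (n₁ : ℚ)) * ((N : ℚ) - (n₂ : ℚ)) * (c : ℚ))
            = ∑ n₁ ∈ Finset.Icc 1 (n₂ - 1),
                (fun (a : ℕ) => (1 : ℚ) / ((a : ℚ) * ((N - n₂ : ℕ) : ℚ) * (c : ℚ))) (N - n₁) := by
              rw [show Finset.Ioo 0 n₂ = Finset.Icc 1 (n₂ - 1) from by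
                ext t; simp only [Finset.mem_Ioo, Finset.mem_Icc]; omega]
              refine Finset.sum_congr rfl fun n₁ h₁ => ?_
              simp only [Finset.mem_Icc] at h₁
              have hc1 : ((N : ℚ) - (n₁ : ℚ)) = ((N - n₁ : ℕ) : ℚ) := by
                push_cast [Nat.cast_sub (by omega : n₁ ≤ N)]; ring
              rw [hc1, hc2]
          _ = ∑ a ∈ Finset.Icc (N - (n₂ - 1)) (N - 1),
                (1 : ℚ) / ((a : ℚ) * ((N - n₂ : ℕ) : ℚ) * (c : ℚ)) :=
              sum_Icc_reflect (N := N) (u := 1) (v := n₂ - 1) (by omega) (by omega)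
                (fun (a : ℕ) => (1 : ℚ) / ((a : ℚ) * ((N - n₂ : ℕ) : ℚ) * (c : ℚ)))
          _ = ∑ a ∈ Finset.Icc ((N - n₂ : ℕ) + 1) (N - 1),
                (1 : ℚ) / ((a : ℚ) * ((N - n₂ : ℕ) : ℚ) * (c : ℚ)) := by
              rw [show N - (n₂ - 1) = (N - n₂) + 1 from by omega]
    _ = ∑ c ∈ Finset.Ioo 0 N, ∑ b ∈ Finset.Icc (N - c) (N - 1),
          ∑ a ∈ Finset.Icc (b + 1) (N - 1), (1 : ℚ) / ((a : ℚ) * (b : ℚ) * (c : ℚ)) := by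
        refine Finset.sum_congr rfl fun c hc => ?_
        simp only [Finset.mem_Ioo] at hc
        exact sum_Icc_reflect (N := N) (u := 1) (v := c) (by omega) (by omega)
          (fun (b : ℕ) => ∑ a ∈ Finset.Icc (b + 1) (N - 1),
            (1 : ℚ) / ((a : ℚ) * (b : ℚ) * (c : ℚ)))
    _ = ∑ b ∈ Finset.Ioo 0 N, ∑ c ∈ Finset.Icc (N - b) (N - 1),
          ∑ a ∈ Finset.Icc (b + 1) (N - 1), (1 : ℚ) / ((a : ℚ) * (b : ℚ) * (c : ℚ)) :=
        cond_swap N (fun c b => ∑ a ∈ Finset.Icc (b + 1) (N - 1),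
          (1 : ℚ) / ((a : ℚ) * (b : ℚ) * (c : ℚ)))
    _ = ∑ b ∈ Finset.Ioo 0 N, ∑ a ∈ Finset.Icc (b + 1) (N - 1),
          ∑ c ∈ Finset.Icc (N - b) (N - 1), (1 : ℚ) / ((a : ℚ) * (b : ℚ) * (c : ℚ)) :=
        Finset.sum_congr rfl fun b _ => Finset.sum_comm
    _ = Rsum N := by
        rw [Rsum]
        exact Finset.sum_congr rfl fun b _ => by rw [hIccIoo b]

/-- The case `ζ_{<N}(1,2) = ζ♭_{<N}(1,2)` of the MSW formula:
`∑_{0<m₁<m₂<N} 1/(m₁m₂²) = ∑_{0<n₁<n₂≤n₃<N} 1/((N-n₁)(N-n₂)n₃)`. -/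
theorem MSW_one_two (N : ℕ) (hN : 0 < N) :
    ∑ m₂ ∈ Finset.Ioo 0 N, ∑ m₁ ∈ Finset.Ioo 0 m₂,
        (1 : ℚ) / ((m₁ : ℚ) * (m₂ : ℚ) ^ 2) =
      ∑ n₃ ∈ Finset.Ioo 0 N, ∑ n₂ ∈ Finset.Icc 1 n₃, ∑ n₁ ∈ Finset.Ioo 0 n₂,
        (1 : ℚ) / (((N : ℚ) - (n₁ : ℚ)) * ((N : ℚ) - (n₂ : ℚ)) * (n₃ : ℚ)) := by
  rw [rhs_eq N hN, key N, Lsum]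
end

section
/- For any index k = (k_1,…,k_r) of positive integers and any positive integer N, the multiple harmonic sum ζ_{<N}(k) = ∑_{0<m_1<⋯<m_r<N} ∏_i 1/m_i^{k_i} equals the sum ζ^♭_{<N}(k) = ∑ ∏_{i=1}^r 1/((N-n_{i1}) n_{i2} ⋯ n_{i k_i}), where the latter sum runs over integers n_{ij} ∈ [1,N-1] satisfying n_{i1} ≤ n_{i2} ≤ ⋯ ≤ n_{i k_i} for each i and n_{i k_i} < n_{(i+1)1} for 1 ≤ i < r. -/
/-!
For `M ≤ N`, weight the top variable `a` of `ζ_{<N}(k₁,…,k_r)` by `C(M-1,a)/C(N-1,a)`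
(`weightedZeta`). At `M = N` the weight is `1`, and by induction on the index the weighted
sum equals the ♭-sum with upper bound `M`, one block at a time. Two summation identities move
the weight across one variable: `∑_{0<n<M} C(n,a)/n = C(M-1,a)/a` absorbs a variable carrying
`1/n` into the weight, and
`∑_{m<a<N} C(M-1,a)/(a·C(N-1,a)) = ∑_{0<n<M} C(n-1,m)/((N-n)·C(N-1,m))`
creates the bottom variable `1/(N-n)` of a block. The latter telescopes, first in `M`, then
in `a`.
-/

/-- Auxiliary recursion: `zetaAux M t` sums over `0 < m₁ < ⋯ < m_r < M` where the
exponent list `t` lists the exponents from the *largest* variable downwards. -/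
def zetaAux : ℕ → List ℕ → ℚ
  | _, [] => 1
  | M, k :: t => ∑ m ∈ Finset.Ioo 0 M, (1 / (m : ℚ) ^ k) * zetaAux m t

/-- The multiple harmonic sum `ζ_{<N}(k₁,…,k_r) = ∑_{0<m₁<⋯<m_r<N} ∏ᵢ 1/mᵢ^{kᵢ}`. -/
def zetaMHS (N : ℕ) (ks : List ℕ) : ℚ := zetaAux N ks.reverse

/-- Auxiliary recursion for the ♭-sum.  `flatAux N M j t` sums over the remaining `j`
(bottom) variables `n₁ ≤ ⋯ ≤ n_j < M` of the current block (the bottom variable carries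
the factor `1/(N - n₁)`, the others `1/n`), followed by the blocks listed in `t`
(given in reverse order, so that for the next block `k` the condition
`n_{k-top} < n₁` holds). -/
def flatAux (N : ℕ) : ℕ → ℕ → List ℕ → ℚ
  | _, 0, [] => 1
  | M, 0, k :: t => flatAux N M k t
  | M, 1, t => ∑ n ∈ Finset.Ioo 0 M, (1 / ((N : ℚ) - (n : ℚ))) * flatAux N n 0 t
  | M, (j+2), t => ∑ n ∈ Finset.Ioo 0 M, (1 / (n : ℚ)) * flatAux N (n+1) (j+1) t
  termination_by _ j t => (t.length, j)

/-- The ♭-sum `ζ♭_{<N}(k₁,…,k_r)`: the sum of `∏ᵢ 1/((N-n_{i1})·n_{i2}⋯n_{i k_i})` over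
`n_{ij} ∈ [1,N-1]` with `n_{i1} ≤ ⋯ ≤ n_{i k_i}` for each `i` and
`n_{i k_i} < n_{(i+1)1}` for `1 ≤ i < r`. -/
def zetaFlat (N : ℕ) (ks : List ℕ) : ℚ := flatAux N N 0 ks.reverse

open Finset

theorem Nat.cast_choose_succ_mul {R : Type*} [CommRing R] (n k : ℕ) :
    (n.choose (k + 1) : R) * (k + 1) = n.choose k * (n - k) := by
  rcases le_or_gt k n with hkn | hnk
  · exact_mod_cast congrArg (Nat.cast : ℕ → R) (Nat.choose_succ_right_eq n k) |>.trans
      (by push_cast [Nat.cast_sub hkn]; ring)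
  · simp [Nat.choose_eq_zero_of_lt hnk, Nat.choose_eq_zero_of_lt (hnk.trans k.lt_succ_self)]

theorem Finset.sum_Ioo_succ_top {M : Type*} [AddCommMonoid M] {a b : ℕ} (hab : a < b)
    (f : ℕ → M) : ∑ n ∈ Ioo a (b + 1), f n = ∑ n ∈ Ioo a b, f n + f b := by
  rw [Ioo_add_one_right_eq_Ioc, ← Ioo_insert_right hab, sum_insert (by simp), add_comm]

theorem sum_Ioo_choose_div_self {a : ℕ} (ha : 0 < a) (M : ℕ) :
    ∑ n ∈ Ioo 0 M, (n.choose a : ℚ) / n = (M - 1).choose a / a := by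
  induction M with
  | zero => simp [Nat.choose_eq_zero_of_lt ha]
  | succ L ih =>
    rcases Nat.eq_zero_or_pos L with rfl | hL
    · simp [Nat.choose_eq_zero_of_lt ha, show Ioo 0 1 = (∅ : Finset ℕ) by rfl]
    obtain ⟨b, rfl⟩ : ∃ b, a = b + 1 := ⟨a - 1, by omega⟩
    obtain ⟨L, rfl⟩ : ∃ L', L = L' + 1 := ⟨L - 1, by omega⟩
    have pascal : ((L + 1).choose (b + 1) : ℚ) = L.choose b + L.choose (b + 1) := by
      exact_mod_cast Nat.choose_succ_succ' L b
    have absorb : ((L + 1 : ℕ) : ℚ) * L.choose b = (L + 1).choose (b + 1) * (b + 1) := by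
      exact_mod_cast Nat.add_one_mul_choose_eq L b
    rw [sum_Ioo_succ_top hL, ih]
    simp only [Nat.add_sub_cancel]
    push_cast at absorb ⊢
    field_simp
    linear_combination -((L : ℚ) + 1) * pascal - absorb

def chooseRatio (N M a : ℕ) : ℚ := ((M - 1).choose a : ℚ) / (N - 1).choose a

theorem chooseRatio_zero_right (N M : ℕ) : chooseRatio N M 0 = 1 := by
  simp [chooseRatio]

theorem chooseRatio_self {N a : ℕ} (ha : a < N) : chooseRatio N N a = 1 :=
  div_self (by exact_mod_cast (Nat.choose_pos (by omega)).ne')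

theorem chooseRatio_eq_zero {N M a : ℕ} (h : M - 1 < a) : chooseRatio N M a = 0 := by
  simp [chooseRatio, Nat.choose_eq_zero_of_lt h]

theorem sum_Ioo_div_mul_chooseRatio_succ (N : ℕ) {a : ℕ} (ha : 0 < a) (M : ℕ) :
    ∑ n ∈ Ioo 0 M, 1 / (n : ℚ) * chooseRatio N (n + 1) a = 1 / (a : ℚ) * chooseRatio N M a := by
  have h := congrArg (· / ((N - 1).choose a : ℚ)) (sum_Ioo_choose_div_self ha M)
  simp only [sum_div] at h
  convert h using 1
  · exact sum_congr rfl fun n _ => by simp only [chooseRatio, Nat.add_sub_cancel]; ring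
  · simp only [chooseRatio]; ring

theorem div_mul_chooseRatio_succ_sub {N M a : ℕ} (hM : 0 < M) (hMN : M < N) (ha : 0 < a)
    (haN : a < N) :
    1 / (a : ℚ) * (chooseRatio N (M + 1) a - chooseRatio N M a) =
      1 / ((N : ℚ) - M) * (chooseRatio N M (a - 1) - chooseRatio N M a) := by
  obtain ⟨L, rfl⟩ : ∃ L, M = L + 1 := ⟨M - 1, by omega⟩
  obtain ⟨K, rfl⟩ : ∃ K, N = K + 1 := ⟨N - 1, by omega⟩
  obtain ⟨b, rfl⟩ : ∃ b, a = b + 1 := ⟨a - 1, by omega⟩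
  simp only [chooseRatio, Nat.add_sub_cancel]
  have pascal : ((L + 1).choose (b + 1) : ℚ) = L.choose b + L.choose (b + 1) := by
    exact_mod_cast Nat.choose_succ_succ' L b
  have hK := Nat.cast_choose_succ_mul (R := ℚ) K b
  have hL := Nat.cast_choose_succ_mul (R := ℚ) L b
  have hKb : (K.choose b : ℚ) ≠ 0 := by exact_mod_cast (Nat.choose_pos (by omega)).ne'
  have hKb' : (K.choose (b + 1) : ℚ) ≠ 0 := by exact_mod_cast (Nat.choose_pos (by omega)).ne'
  have hLK : (K : ℚ) + 1 - (L + 1) ≠ 0 := by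
    rw [add_sub_add_right_eq_sub, sub_ne_zero]; exact_mod_cast (by omega : K ≠ L)
  push_cast
  rw [pascal]
  field_simp
  linear_combination (K.choose b : ℚ) * hL - (L.choose b : ℚ) * hK

theorem sum_Ioo_chooseRatio_pred_sub {N M : ℕ} (hM : 0 < M) (hMN : M < N) (m : ℕ) :
    ∑ a ∈ Ioo m N, (chooseRatio N M (a - 1) - chooseRatio N M a) = chooseRatio N M m := by
  rcases lt_or_ge m N with hmN | hNm
  · have h := sum_Ico_sub (fun a => -chooseRatio N M (a - 1)) (show m + 1 ≤ N by omega)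
    simp only [Nat.add_sub_cancel, neg_sub_neg] at h
    rw [← Ico_add_one_left_eq_Ioo, h, chooseRatio_eq_zero (a := N - 1) (by omega), sub_zero]
  · rw [Ioo_eq_empty (by omega), sum_empty, chooseRatio_eq_zero (by omega)]

theorem sum_Ioo_div_mul_chooseRatio {N M : ℕ} (hMN : M ≤ N) (m : ℕ) :
    ∑ a ∈ Ioo m N, 1 / (a : ℚ) * chooseRatio N M a =
      ∑ n ∈ Ioo 0 M, 1 / ((N : ℚ) - n) * chooseRatio N n m := by
  have vanish : ∀ M ≤ 1, ∑ a ∈ Ioo m N, 1 / (a : ℚ) * chooseRatio N M a = 0 := fun M hM =>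
    sum_eq_zero fun a ha => by rw [chooseRatio_eq_zero (by simp at ha; omega), mul_zero]
  induction M with
  | zero => rw [vanish 0 zero_le_one, Ioo_self, sum_empty]
  | succ M ih =>
    rcases Nat.eq_zero_or_pos M with rfl | hM
    · rw [vanish 1 le_rfl]; rfl
    rw [sum_Ioo_succ_top hM, ← ih (by omega),
      ← sum_Ioo_chooseRatio_pred_sub hM (by omega) m, mul_sum, ← sum_add_distrib]
    refine sum_congr rfl fun a ha => ?_
    simp only [mem_Ioo] at ha
    linear_combination div_mul_chooseRatio_succ_sub hM (by omega : M < N) (by omega) ha.2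

def weightedZeta (N M : ℕ) : List ℕ → ℚ
  | [] => 1
  | k :: w => ∑ a ∈ Ioo 0 N, 1 / (a : ℚ) ^ k * chooseRatio N M a * zetaAux a w

theorem weightedZeta_self (N : ℕ) (w : List ℕ) : weightedZeta N N w = zetaAux N w := by
  cases w with
  | nil => rfl
  | cons k w =>
    refine sum_congr rfl fun a ha => ?_
    rw [chooseRatio_self (mem_Ioo.mp ha).2, mul_one]

theorem sum_Ioo_div_mul_weightedZeta {N M : ℕ} (hMN : M ≤ N) (w : List ℕ) :
    ∑ n ∈ Ioo 0 M, 1 / ((N : ℚ) - n) * weightedZeta N n w =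
      ∑ a ∈ Ioo 0 N, 1 / (a : ℚ) * chooseRatio N M a * zetaAux a w := by
  cases w with
  | nil =>
    simp only [weightedZeta, zetaAux, mul_one]
    rw [sum_Ioo_div_mul_chooseRatio hMN 0]
    simp only [chooseRatio_zero_right, mul_one]
  | cons k w =>
    calc ∑ n ∈ Ioo 0 M, 1 / ((N : ℚ) - n) * weightedZeta N n (k :: w)
        = ∑ b ∈ Ioo 0 N, 1 / (b : ℚ) ^ k * zetaAux b w *
            ∑ n ∈ Ioo 0 M, 1 / ((N : ℚ) - n) * chooseRatio N n b := by
          simp only [weightedZeta, mul_sum]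
          rw [sum_comm]
          exact sum_congr rfl fun b _ => sum_congr rfl fun n _ => by ring
      _ = ∑ b ∈ Ioo 0 N, ∑ a ∈ Ioo b N,
            1 / (a : ℚ) * chooseRatio N M a * (1 / (b : ℚ) ^ k * zetaAux b w) := by
          refine sum_congr rfl fun b _ => ?_
          rw [← sum_Ioo_div_mul_chooseRatio hMN, mul_comm, sum_mul]
      _ = ∑ a ∈ Ioo 0 N, 1 / (a : ℚ) * chooseRatio N M a * zetaAux a (k :: w) := by
          rw [sum_comm' (t' := Ioo 0 N) (s' := fun a => Ioo 0 a)
            fun b a => by simp only [mem_Ioo]; omega]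
          simp only [zetaAux, mul_sum]

theorem flatAux_succ_eq_weightedZeta {N : ℕ} {w : List ℕ}
    (hw : ∀ n ≤ N, weightedZeta N n w = flatAux N n 0 w) (j : ℕ) {M : ℕ} (hMN : M ≤ N) :
    flatAux N M (j + 1) w = weightedZeta N M ((j + 1) :: w) := by
  induction j generalizing M with
  | zero =>
    rw [flatAux, weightedZeta, zero_add]
    simp only [pow_one]
    rw [← sum_Ioo_div_mul_weightedZeta hMN]
    exact sum_congr rfl fun n hn => by rw [hw n (by simp at hn; omega)]
  | succ j ih =>
    rw [flatAux]
    calc ∑ n ∈ Ioo 0 M, 1 / (n : ℚ) * flatAux N (n + 1) (j + 1) w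
        = ∑ a ∈ Ioo 0 N, 1 / (a : ℚ) ^ (j + 1) * zetaAux a w *
            ∑ n ∈ Ioo 0 M, 1 / (n : ℚ) * chooseRatio N (n + 1) a := by
          rw [sum_congr rfl fun n hn => by rw [ih (M := n + 1) (by simp at hn; omega)]]
          simp only [weightedZeta, mul_sum]
          rw [sum_comm]
          exact sum_congr rfl fun a _ => sum_congr rfl fun n _ => by ring
      _ = weightedZeta N M ((j + 1 + 1) :: w) := by
          refine sum_congr rfl fun a ha => ?_
          rw [sum_Ioo_div_mul_chooseRatio_succ N (mem_Ioo.mp ha).1]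
          ring

theorem weightedZeta_eq_flatAux {N : ℕ} {w : List ℕ} (hw : ∀ k ∈ w, 0 < k) {M : ℕ}
    (hMN : M ≤ N) : weightedZeta N M w = flatAux N M 0 w := by
  induction w generalizing M with
  | nil => rw [flatAux]; rfl
  | cons k w ih =>
    obtain ⟨j, rfl⟩ : ∃ j, k = j + 1 := ⟨k - 1, by have := hw k (by simp); omega⟩
    have hw' : ∀ n ≤ N, weightedZeta N n w = flatAux N n 0 w :=
      fun n hn => ih (fun k hk => hw k (by simp [hk])) hn
    rw [flatAux, flatAux_succ_eq_weightedZeta hw' j hMN]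

theorem MSW_formula_general (N : ℕ) (ks : List ℕ) (hks : ∀ a ∈ ks, 0 < a) :
    zetaMHS N ks = zetaFlat N ks := by
  rw [zetaMHS, zetaFlat, ← weightedZeta_self, weightedZeta_eq_flatAux (by simpa using hks) le_rfl]

/-- The Maesaka–Seki–Watanabe formula: `ζ_{<N}(k) = ζ♭_{<N}(k)` for every index `k`
(a finite tuple of positive integers) and every integer `N > 0`. -/
theorem MSW_formula (N : ℕ) (hN : 0 < N) (ks : List ℕ) (hks : ∀ a ∈ ks, 0 < a) :
    zetaMHS N ks = zetaFlat N ks :=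
  MSW_formula_general N ks hks
end

section
/- For any nonempty index (k_1,…,k_r) of positive integers and any positive integer N, ∑_{i=0}^r (-1)^i · ζ_{<N}(k_1,…,k_i) · ζ^⋆_{<N}(k_r,…,k_{i+1}) = 0, where ζ_{<N}(k_1,…,k_i) = ∑_{0<m_1<⋯<m_i<N} ∏_j 1/m_j^{k_j} and ζ^⋆_{<N}(k_r,…,k_{i+1}) = ∑_{0<m_r'≤⋯≤m_{i+1}'<N} ∏_j 1/(m_j')^{k_j}, with the empty products interpreted as 1. -/
/-- Auxiliary recursion: `zetaStarAux M t` sums over `0 < m₁ ≤ ⋯ ≤ m_r < M` where the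
exponent list `t` lists the exponents from the *largest* variable downwards. -/
def zetaStarAux : ℕ → List ℕ → ℚ
  | _, [] => 1
  | M, k :: t => ∑ m ∈ Finset.Ioo 0 M, (1 / (m : ℚ) ^ k) * zetaStarAux (m + 1) t

/-- The multiple star harmonic sum `ζ⋆_{<N}(k₁,…,k_r) = ∑_{0<m₁≤⋯≤m_r<N} ∏ᵢ 1/mᵢ^{kᵢ}`. -/
def zetaStar (N : ℕ) (ks : List ℕ) : ℚ := zetaStarAux N ks.reverse

lemma zetaAux_cons (M k : ℕ) (t : List ℕ) :
    zetaAux M (k :: t) = ∑ m ∈ Finset.Ioo 0 M, (1 / (m : ℚ) ^ k) * zetaAux m t := rfl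

lemma zetaStarAux_cons (M k : ℕ) (t : List ℕ) :
    zetaStarAux M (k :: t) = ∑ m ∈ Finset.Ioo 0 M, (1 / (m : ℚ) ^ k) * zetaStarAux (m + 1) t := rfl

lemma zetaAux_split (n N j : ℕ) (hn : 0 < n) (hnN : n ≤ N) (u : List ℕ) :
    zetaAux N (j :: u) = zetaAux n (j :: u) +
      ∑ m ∈ Finset.Ico n N, (1 / (m : ℚ) ^ j) * zetaAux m u := by
  rw [zetaAux_cons, zetaAux_cons, ← Finset.sum_union]
  · apply Finset.sum_congr _ (fun _ _ => rfl)
    ext x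
    simp only [Finset.mem_Ioo, Finset.mem_union, Finset.mem_Ico]
    omega
  · rw [Finset.disjoint_left]
    intro a ha hb
    simp only [Finset.mem_Ioo, Finset.mem_Ico] at ha hb
    omega

lemma key_s4 (N j k : ℕ) (u v : List ℕ) :
    zetaAux N (j :: u) * zetaStarAux N (k :: v) =
      (∑ n ∈ Finset.Ioo 0 N, (1 / (n : ℚ) ^ j) * zetaAux n u * zetaStarAux (n + 1) (k :: v)) +
      (∑ n ∈ Finset.Ioo 0 N, (1 / (n : ℚ) ^ k) * zetaAux n (j :: u) * zetaStarAux (n + 1) v) := by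
  rw [zetaStarAux_cons, Finset.mul_sum]
  have h1 : ∀ n ∈ Finset.Ioo 0 N,
      zetaAux N (j :: u) * ((1 / (n : ℚ) ^ k) * zetaStarAux (n + 1) v) =
      (1 / (n : ℚ) ^ k) * zetaAux n (j :: u) * zetaStarAux (n + 1) v +
      ∑ m ∈ Finset.Ico n N, (1 / (n : ℚ) ^ k) * zetaStarAux (n + 1) v *
        ((1 / (m : ℚ) ^ j) * zetaAux m u) := by
    intro n hn
    simp only [Finset.mem_Ioo] at hn
    rw [zetaAux_split n N j hn.1 hn.2.le u, add_mul, Finset.sum_mul]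
    congr 1
    · ring
    · apply Finset.sum_congr rfl; intro m _; ring
  rw [Finset.sum_congr rfl h1, Finset.sum_add_distrib]
  have h2 : (∑ n ∈ Finset.Ioo 0 N, ∑ m ∈ Finset.Ico n N,
      (1 / (n : ℚ) ^ k) * zetaStarAux (n + 1) v * ((1 / (m : ℚ) ^ j) * zetaAux m u)) =
      ∑ m ∈ Finset.Ioo 0 N, (1 / (m : ℚ) ^ j) * zetaAux m u * zetaStarAux (m + 1) (k :: v) := by
    have : Finset.Ioo 0 N = Finset.Ico 1 N := rfl
    rw [this, Finset.sum_Ico_Ico_comm]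
    apply Finset.sum_congr rfl
    intro m _
    rw [zetaStarAux_cons]
    have : Finset.Ioo 0 (m + 1) = Finset.Ico 1 (m + 1) := rfl
    rw [this, Finset.mul_sum]
    apply Finset.sum_congr rfl
    intro n _
    ring
  rw [h2]
  ring

/-- The telescoping term. -/
def Bfun (N : ℕ) (ks : List ℕ) (i : ℕ) : ℚ :=
  match ks.drop i with
  | [] => 0
  | k :: v => ∑ n ∈ Finset.Ioo 0 N, (1 / (n : ℚ) ^ k) * zetaAux n (ks.take i).reverse *
      zetaStarAux (n + 1) v

lemma Bfun_of_drop (N : ℕ) (ks : List ℕ) (i k : ℕ) (v : List ℕ) (h : ks.drop i = k :: v) :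
    Bfun N ks i = ∑ n ∈ Finset.Ioo 0 N, (1 / (n : ℚ) ^ k) * zetaAux n (ks.take i).reverse *
      zetaStarAux (n + 1) v := by
  unfold Bfun
  rw [h]

lemma Bfun_zero_of_le (N : ℕ) (ks : List ℕ) (i : ℕ) (h : ks.length ≤ i) :
    Bfun N ks i = 0 := by
  unfold Bfun
  rw [List.drop_eq_nil_of_le h]

lemma take_reverse_eq (ks : List ℕ) (m : ℕ) (hm : m < ks.length) :
    (ks.take (m + 1)).reverse = ks[m] :: (ks.take m).reverse := by
  rw [List.take_succ, List.getElem?_eq_getElem hm]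
  simp

lemma term_eq (N : ℕ) (ks : List ℕ) (i : ℕ) (hi : 0 < i) (hi' : i ≤ ks.length) :
    zetaAux N (ks.take i).reverse * zetaStarAux N (ks.drop i) =
      Bfun N ks (i - 1) + Bfun N ks i := by
  obtain ⟨m, rfl⟩ : ∃ m, i = m + 1 := ⟨i - 1, by omega⟩
  have hm : m < ks.length := by omega
  have hdropm : ks.drop m = ks[m] :: ks.drop (m + 1) := List.drop_eq_getElem_cons hm
  simp only [Nat.add_sub_cancel]
  rw [take_reverse_eq ks m hm]
  rcases Nat.lt_or_ge (m + 1) ks.length with hm1 | hm1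
  · -- middle case
    have hdropm1 : ks.drop (m + 1) = ks[m + 1] :: ks.drop (m + 2) :=
      List.drop_eq_getElem_cons hm1
    rw [hdropm1, key_s4 N ks[m] ks[m+1] (ks.take m).reverse (ks.drop (m + 2))]
    rw [Bfun_of_drop N ks m ks[m] (ks[m+1] :: ks.drop (m + 2)) (by rw [hdropm, hdropm1]),
      Bfun_of_drop N ks (m + 1) ks[m+1] (ks.drop (m + 2)) hdropm1]
    rw [take_reverse_eq ks m hm]
  · -- last case
    have hdnil : ks.drop (m + 1) = [] := List.drop_eq_nil_of_le hm1
    rw [hdnil]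
    rw [Bfun_zero_of_le N ks (m + 1) hm1, add_zero,
      Bfun_of_drop N ks m ks[m] [] (by rw [hdropm, hdnil])]
    show (∑ n ∈ Finset.Ioo 0 N, (1 / (n : ℚ) ^ ks[m]) * zetaAux n (ks.take m).reverse) * 1 = _
    rw [mul_one]
    apply Finset.sum_congr rfl
    intro n _
    show _ = _ * zetaStarAux (n + 1) []
    rw [show zetaStarAux (n + 1) [] = 1 from rfl, mul_one]

lemma term_eq_zero (N : ℕ) (ks : List ℕ) (hne : ks ≠ []) :
    zetaStarAux N ks = Bfun N ks 0 := by
  obtain ⟨k, v, rfl⟩ := List.exists_cons_of_ne_nil hne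
  rw [Bfun_of_drop N (k :: v) 0 k v rfl, zetaStarAux_cons]
  apply Finset.sum_congr rfl
  intro n _
  show _ = 1 / (n : ℚ) ^ k * zetaAux n [] * _
  rw [show zetaAux n [] = 1 from rfl, mul_one]


/-- The antipode identity: for a nonempty index `(k₁,…,k_r)` and `N > 0`,
`∑_{i=0}^r (-1)^i ζ_{<N}(k₁,…,kᵢ) ζ⋆_{<N}(k_r,…,k_{i+1}) = 0`. -/
theorem antipode_identity (N : ℕ) (hN : 0 < N) (ks : List ℕ) (hne : ks ≠ [])
    (hks : ∀ a ∈ ks, 0 < a) :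
    ∑ i ∈ Finset.range (ks.length + 1),
      (-1 : ℚ) ^ i * zetaMHS N (ks.take i) * zetaStar N ((ks.drop i).reverse) = 0 := by
  have hS : ∀ i, zetaStar N ((ks.drop i).reverse) = zetaStarAux N (ks.drop i) := by
    intro i; unfold zetaStar; rw [List.reverse_reverse]
  have hterm : ∀ i ∈ Finset.range (ks.length + 1),
      (-1 : ℚ) ^ i * zetaMHS N (ks.take i) * zetaStar N ((ks.drop i).reverse) =
      (-1 : ℚ) ^ i * ((if i = 0 then 0 else Bfun N ks (i - 1)) + Bfun N ks i) := by
    intro i hi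
    simp only [Finset.mem_range] at hi
    rw [show zetaMHS N (ks.take i) = zetaAux N (ks.take i).reverse from rfl, hS, mul_assoc]
    rcases Nat.eq_zero_or_pos i with rfl | hpos
    · simp only [List.take_zero, List.drop_zero, List.reverse_nil, ite_true, if_true, zero_add]
      rw [show zetaAux N ([] : List ℕ) = 1 from rfl, one_mul, term_eq_zero N ks hne]
    · rw [if_neg (by omega), term_eq N ks i hpos (by omega)]
  rw [Finset.sum_congr rfl hterm]
  simp only [mul_add]
  rw [Finset.sum_add_distrib, Finset.sum_range_succ', Finset.sum_range_succ,
    Bfun_zero_of_le N ks ks.length le_rfl]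
  simp only [Nat.add_eq_zero, one_ne_zero, and_false, ite_false, if_false, ite_true, if_true,
    Nat.add_sub_cancel, mul_zero, add_zero]
  rw [← Finset.sum_add_distrib]
  apply Finset.sum_eq_zero
  intro i _
  rw [pow_succ]
  ring
end

section
/- For any nonempty index (k_1,…,k_r) of positive integers and any positive integer N, ∑_{i=0}^r (-1)^i · ζ^♭_{<N}(k_1,…,k_i) · ζ^{⋆♭}_{<N}(k_r,…,k_{i+1}) = 0, the antipode identity for the ♭-versions of multiple harmonic sums. -/
/-- Auxiliary recursion for the ⋆♭-sum.  `sfAux N lo hi j t` sums over the remaining `j`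
variables of the current block, going downwards from the top: the current variable ranges
over `[lo, hi]`; the bottom variable of a block carries the factor `1/(N - n)` and its
value is the (inclusive) lower bound for the top variable of the next block
(the condition `n_{(i-1)1} ≤ n_{i k_i}`), whose range goes up to `N - 1`. -/
def sfAux (N : ℕ) : ℕ → ℕ → ℕ → List ℕ → ℚ
  | _, _, 0, [] => 1
  | lo, _, 0, k :: t => sfAux N lo (N - 1) k t
  | lo, hi, 1, t => ∑ n ∈ Finset.Icc lo hi, (1 / ((N : ℚ) - (n : ℚ))) * sfAux N n 0 0 t
  | lo, hi, (j+2), t => ∑ n ∈ Finset.Icc lo hi, (1 / (n : ℚ)) * sfAux N 1 n (j+1) t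
  termination_by _ _ j t => (t.length, j)

/-- The ⋆♭-sum `ζ⋆♭_{<N}(k₁,…,k_r)`: the sum of `∏ᵢ 1/((N-n_{i1})·n_{i2}⋯n_{i k_i})` over
`n_{ij} ∈ [1,N-1]` with `n_{i1} ≤ ⋯ ≤ n_{i k_i}` for each `i` and
`n_{(i-1)1} ≤ n_{i k_i}` for `2 ≤ i ≤ r`. -/
def zetaStarFlat (N : ℕ) (ks : List ℕ) : ℚ := sfAux N 1 (N - 1) 0 ks

open Finset

/-- `mixedFlatAux N lo hi j s t` follows `sfAux N lo hi j s`, but where `sfAux` stops, at the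
bottom variable `m` of the last block of `s` (or at `m = lo` if there is none), it continues with
the ♭-sum `flatAux N m 0 t` over the blocks `t`, all of whose variables are `< m`. -/
def mixedFlatAux (N : ℕ) : ℕ → ℕ → ℕ → List ℕ → List ℕ → ℚ
  | lo, _, 0, [], t => flatAux N lo 0 t
  | lo, _, 0, k :: s, t => mixedFlatAux N lo (N - 1) k s t
  | lo, hi, 1, s, t => ∑ n ∈ Icc lo hi, (1 / ((N : ℚ) - (n : ℚ))) * mixedFlatAux N n 0 0 s t
  | lo, hi, (j+2), s, t => ∑ n ∈ Icc lo hi, (1 / (n : ℚ)) * mixedFlatAux N 1 n (j+1) s t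
  termination_by _ _ j s _ => (s.length, j)

section

variable (N : ℕ)

theorem mixedFlatAux_nil_right (lo hi j : ℕ) (s : List ℕ) :
    mixedFlatAux N lo hi j s [] = sfAux N lo hi j s := by
  fun_induction sfAux N lo hi j s <;> simp_all [mixedFlatAux, flatAux]

theorem flatAux_one_zero_cons {k : ℕ} (hk : 0 < k) (t : List ℕ) : flatAux N 1 0 (k :: t) = 0 := by
  obtain ⟨j, rfl⟩ := Nat.exists_eq_add_of_lt hk
  have hIoo : Ioo 0 1 = (∅ : Finset ℕ) := rfl
  rcases j with _ | j <;> simp [flatAux, hIoo]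

theorem mixedFlatAux_one_nil_left (j hi : ℕ) (t : List ℕ) :
    mixedFlatAux N 1 hi (j+1) [] t = flatAux N (hi+1) (j+1) t := by
  have hIoo (hi : ℕ) : Ioo 0 (hi + 1) = Icc 1 hi := by ext; simp; omega
  induction j generalizing hi with
  | zero => simp [mixedFlatAux, flatAux, hIoo]
  | succ j ih => simp only [mixedFlatAux, flatAux, hIoo, ih]

theorem mixedFlatAux_nil_left (j : ℕ) (t : List ℕ) {lo : ℕ} (h1 : 1 ≤ lo) (h2 : lo ≤ N) :
    mixedFlatAux N lo (N - 1) (j+1) [] t = flatAux N N (j+1) t - flatAux N lo (j+1) t := by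
  have hIcc : Icc lo (N - 1) = Ioo 0 N \ Ioo 0 lo := by ext; simp; omega
  have hsub : Ioo 0 lo ⊆ Ioo 0 N := Ioo_subset_Ioo_right h2
  rcases j with _ | j
  · simp [mixedFlatAux, flatAux, hIcc, sum_sdiff_eq_sub hsub]
  · simp [mixedFlatAux, flatAux, hIcc, sum_sdiff_eq_sub hsub, mixedFlatAux_one_nil_left]

theorem mixedFlatAux_append_singleton_add_cons {k : ℕ} (hk : 0 < k) (t : List ℕ)
    (lo hi j : ℕ) (s : List ℕ) (h1 : 1 ≤ lo) (h2 : lo ≤ N) (h3 : hi ≤ N - 1) :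
    mixedFlatAux N lo hi j (s ++ [k]) t + mixedFlatAux N lo hi j s (k :: t) =
      flatAux N N 0 (k :: t) * sfAux N lo hi j s := by
  obtain ⟨k, rfl⟩ := Nat.exists_eq_add_one_of_ne_zero hk.ne'
  fun_induction sfAux N lo hi j s with
  | case1 lo hi =>
    simp only [List.nil_append, mixedFlatAux, flatAux, mixedFlatAux_nil_left N k t h1 h2]
    ring
  | case2 lo hi k' s ih => simpa only [List.cons_append, mixedFlatAux, sfAux] using ih h1 h2 le_rfl
  | case3 lo hi s ih =>
    rw [mixedFlatAux, mixedFlatAux, ← sum_add_distrib, mul_sum]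
    refine sum_congr rfl fun n hn => ?_
    rw [mem_Icc] at hn
    rw [← mul_add, ih n (by omega) (by omega) (Nat.zero_le _)]
    ring
  | case4 lo hi j s ih =>
    rw [mixedFlatAux, mixedFlatAux, ← sum_add_distrib, mul_sum]
    refine sum_congr rfl fun n hn => ?_
    rw [mem_Icc] at hn
    rw [← mul_add, ih n le_rfl (by omega) (by omega)]
    ring

end

/-- `antipodeRemainder N ks j = M((k_r, …, k_{j+1}), (k_j, …, k_1))` in the notation above. -/
def antipodeRemainder (N : ℕ) (ks : List ℕ) (j : ℕ) : ℚ :=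
  mixedFlatAux N 1 (N - 1) 0 (ks.drop j).reverse (ks.take j).reverse

section

variable (N : ℕ) (ks : List ℕ)

theorem antipodeRemainder_zero : antipodeRemainder N ks 0 = zetaStarFlat N ks.reverse := by
  simp [antipodeRemainder, zetaStarFlat, mixedFlatAux_nil_right]

theorem zetaFlat_mul_zetaStarFlat_eq_antipodeRemainder_add (hN : 0 < N) {j : ℕ}
    (hj : j < ks.length) (hk : 0 < ks[j]) :
    zetaFlat N (ks.take (j+1)) * zetaStarFlat N (ks.drop (j+1)).reverse =
      antipodeRemainder N ks j + antipodeRemainder N ks (j+1) := by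
  have hdrop : (ks.drop j).reverse = (ks.drop (j+1)).reverse ++ [ks[j]] := by
    rw [List.drop_eq_getElem_cons hj, List.reverse_cons]
  have htake : (ks.take (j+1)).reverse = ks[j] :: (ks.take j).reverse := by
    rw [List.take_add_one, List.getElem?_eq_getElem hj]
    simp
  rw [antipodeRemainder, antipodeRemainder, hdrop, htake, zetaFlat, zetaStarFlat, htake]
  exact (mixedFlatAux_append_singleton_add_cons N hk _ 1 (N - 1) 0 _ le_rfl hN le_rfl).symm

theorem antipodeRemainder_length (hne : ks ≠ []) (hks : ∀ a ∈ ks, 0 < a) :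
    antipodeRemainder N ks ks.length = 0 := by
  obtain ⟨k, t, hrev⟩ := List.exists_cons_of_ne_nil (List.reverse_ne_nil_iff.mpr hne)
  have hk : 0 < k := hks k (List.mem_reverse.mp (hrev ▸ List.mem_cons_self))
  simp [antipodeRemainder, mixedFlatAux, hrev, flatAux_one_zero_cons N hk]

theorem sum_range_alternating_eq_antipodeRemainder (hN : 0 < N) (hks : ∀ a ∈ ks, 0 < a)
    {j : ℕ} (hj : j ≤ ks.length) :
    ∑ i ∈ range (j+1), (-1 : ℚ) ^ i * zetaFlat N (ks.take i) * zetaStarFlat N (ks.drop i).reverse =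
      (-1 : ℚ) ^ j * antipodeRemainder N ks j := by
  induction j with
  | zero => simp [zetaFlat, flatAux, antipodeRemainder_zero]
  | succ j ih =>
    have hj' : j < ks.length := hj
    rw [sum_range_succ, ih hj'.le, mul_assoc,
      zetaFlat_mul_zetaStarFlat_eq_antipodeRemainder_add N ks hN hj' (hks _ (List.getElem_mem hj'))]
    ring

end

/-- The antipode identity for the ♭-versions: for a nonempty index `(k₁,…,k_r)` and `N > 0`,
`∑_{i=0}^r (-1)^i ζ♭_{<N}(k₁,…,kᵢ) ζ⋆♭_{<N}(k_r,…,k_{i+1}) = 0`. -/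
theorem antipode_identity_flat (N : ℕ) (hN : 0 < N) (ks : List ℕ) (hne : ks ≠ [])
    (hks : ∀ a ∈ ks, 0 < a) :
    ∑ i ∈ Finset.range (ks.length + 1),
      (-1 : ℚ) ^ i * zetaFlat N (ks.take i) * zetaStarFlat N ((ks.drop i).reverse) = 0 := by
  rw [sum_range_alternating_eq_antipodeRemainder N ks hN hks le_rfl,
    antipodeRemainder_length N ks hne hks, mul_zero]
end

section
/- Define C_N(m,n) = binom(n,m)/binom(N-1,m) for 0 ≤ m,n ≤ N-1. Then for 0 ≤ m ≤ m' < N and 0 < n < N, ∑_{a=m+1}^{m'} C_N(a,n)·(1/n) = (C_N(m,n-1) − C_N(m',n-1))·(1/(N-n)). -/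
/-!
Absorption `(k+1)·binom(k,b) = (b+1)·binom(k+1,b+1)`, its analogue
`(b+1)·binom(M,b+1) = (M-b)·binom(M,b)` in the denominator, and Pascal's rule show that
`C_N(b+1,k+1)/(k+1)` is the difference of consecutive values of `C_N(·,k)/(N-k-1)`,
so the sum telescopes.
-/

/-- `C_N(m,n) = binom(n,m)/binom(N-1,m)` as a rational number. -/
def Ccoef (N m n : ℕ) : ℚ := (n.choose m : ℚ) / ((N - 1).choose m : ℚ)

open Finset

theorem sum_Icc_add_one_eq_sub {M : Type*} [AddCommGroup M] {m m' : ℕ} (hm : m ≤ m')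
    (f g : ℕ → M) (hg : ∀ b ∈ Ico m m', g (b + 1) = f b - f (b + 1)) :
    ∑ a ∈ Icc (m + 1) m', g a = f m - f m' := by
  rw [← Ico_add_one_right_eq_Icc, ← sum_Ico_add', sum_congr rfl hg, ← neg_sub,
    ← sum_Ico_sub f hm, ← sum_neg_distrib]
  simp_rw [neg_sub]

theorem Ccoef_succ_succ_mul_one_div (N b k : ℕ) (hb : b + 1 < N) (hk : k + 1 < N) :
    Ccoef N (b + 1) (k + 1) * (1 / ((k + 1 : ℕ) : ℚ)) =
      (Ccoef N b k - Ccoef N (b + 1) k) * (1 / ((N : ℚ) - ((k + 1 : ℕ) : ℚ))) := by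
  obtain ⟨M, rfl⟩ : ∃ M, N = M + 1 := ⟨N - 1, by omega⟩
  have hD : (M.choose b : ℚ) ≠ 0 := by exact_mod_cast (Nat.choose_pos (by omega)).ne'
  have hB : (M.choose (b + 1) : ℚ) ≠ 0 := by exact_mod_cast (Nat.choose_pos (by omega)).ne'
  have hMk : (M : ℚ) - k ≠ 0 := by
    have : (k : ℚ) < M := by exact_mod_cast (by omega : k < M)
    linarith
  have hAbsorb : ((k + 1 : ℕ) : ℚ) * (k.choose b) = ((k + 1).choose (b + 1)) * (b + 1) := by
    exact_mod_cast Nat.add_one_mul_choose_eq k b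
  have hAbsorbDenom : (M.choose (b + 1) : ℚ) * (b + 1) = M.choose b * (M - b) := by
    rw [← Nat.cast_sub (by omega)]
    exact_mod_cast Nat.choose_succ_right_eq M b
  have hPascal : ((k + 1).choose (b + 1) : ℚ) = k.choose b + k.choose (b + 1) := by
    exact_mod_cast Nat.choose_succ_succ k b
  have hNk : ((M + 1 : ℕ) : ℚ) - ((k + 1 : ℕ) : ℚ) = M - k := by push_cast; ring
  rw [hNk]
  simp only [Ccoef, Nat.add_sub_cancel]
  field_simp
  push_cast at hAbsorb ⊢
  linear_combination (-(M.choose (b + 1) + M.choose b : ℚ)) * hAbsorb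
    - ((k + 1).choose (b + 1) : ℚ) * hAbsorbDenom - ((k + 1) * M.choose b : ℚ) * hPascal

/-- Lemma 3.6 (2): for `0 ≤ m ≤ m' < N` and `0 < n < N`,
`∑_{a=m+1}^{m'} C_N(a,n)·(1/n) = (C_N(m,n-1) − C_N(m',n-1))·(1/(N-n))`. -/
theorem sum_Ccoef_eq_diff (N m m' n : ℕ) (hm : m ≤ m') (hm' : m' < N)
    (hn : 0 < n) (hnN : n < N) :
    ∑ a ∈ Finset.Icc (m + 1) m', Ccoef N a n * (1 / (n : ℚ)) =
      (Ccoef N m (n - 1) - Ccoef N m' (n - 1)) * (1 / ((N : ℚ) - (n : ℚ))) := by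
  obtain ⟨k, rfl⟩ : ∃ k, n = k + 1 := ⟨n - 1, by omega⟩
  rw [Nat.add_sub_cancel, sub_mul]
  refine sum_Icc_add_one_eq_sub hm (fun b => Ccoef N b k * (1 / ((N : ℚ) - ((k + 1 : ℕ) : ℚ))))
    _ fun b hb => ?_
  have hb' : b + 1 < N := by grind
  rw [Ccoef_succ_succ_mul_one_div N b k hb' hnN, sub_mul]
end

section
/- For any positive integers N and k ≥ 2, the infinite series ∑_{0<m_1≤⋯≤m_k} [∏_{j=1}^{k-1} 1/(m_j+N-1)] · (1/m_k − 1/(m_k+N-1)) converges and equals the finite sum ∑_{0<m<N} 1/m^k. (The depth-one case G_{(k)}(N-1) = ζ^⋆_{<N}(k) of Kawashima's identity.) -/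
/-!
Write `N = P + 1`. Over chains `n < m₁ ≤ ⋯ ≤ m_{d+1}` the series sums to `T_d(n + 1)`, where
`T_d(x) = ∑_{c < P} h_d(c + 1) / (x + c)` (`kawashimaTail`) and `h_d(c)` (`completeHom`) is the
complete homogeneous sum of the weights `1 / (P - a)`, `a < c`. Summing over the smallest entry
`m₁` first, the partial fractions `1 / ((y + c)(y + P)) = (1 / (P - c)) (1 / (y + c) - 1 / (y + P))`
make the sum over `m₁` telescope, and exchanging the order of summation reproduces the recursion
`h_{d+1}(c + 1) = ∑_{a ≤ c} h_d(a + 1) / (P - a)`; the case `d = 0` is a plain telescoping series.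
What remains is the finite identity `T_d(1) = ∑_{m ≤ P} 1 / m^{d+1}`: passing from `P` to `P + 1`,
the chains that use the new weight `1 / (P + 1)` split off, another telescoping sum handles the
rest, and `T_d(1)` grows by exactly `1 / (P + 1)^{d+1}`.
-/

open Finset Filter Topology

noncomputable section

variable {R : Type*} [CommSemiring R]

/-- `completeHom w d c = ∑_{0 ≤ a₁ ≤ ⋯ ≤ a_d < c} w a₁ ⋯ w a_d`, the complete homogeneous symmetric
polynomial `h_d (w 0, …, w (c - 1))`, built by recursion on the largest index. -/
def completeHom (w : ℕ → R) : ℕ → ℕ → R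
  | 0, _ => 1
  | d + 1, c => ∑ a ∈ range c, completeHom w d (a + 1) * w a

@[simp]
theorem completeHom_zero (w : ℕ → R) (c : ℕ) : completeHom w 0 c = 1 := rfl

theorem completeHom_succ (w : ℕ → R) (d c : ℕ) :
    completeHom w (d + 1) c = ∑ a ∈ range c, completeHom w d (a + 1) * w a := rfl

@[simp]
theorem completeHom_succ_zero (w : ℕ → R) (d : ℕ) : completeHom w (d + 1) 0 = 0 := rfl

theorem completeHom_succ_succ (w : ℕ → R) (d c : ℕ) :
    completeHom w (d + 1) (c + 1) =
      w 0 * completeHom w d (c + 1) + completeHom (fun a => w (a + 1)) (d + 1) c := by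
  induction d generalizing c with
  | zero => simp [completeHom_succ, sum_range_succ', add_comm]
  | succ d ih =>
    rw [completeHom_succ w (d + 1) (c + 1), completeHom_succ w d (c + 1),
      completeHom_succ _ (d + 1) c]
    simp only [ih, add_mul, sum_add_distrib, mul_sum, mul_assoc]
    rw [sum_range_succ' (fun a => completeHom _ (d + 1) a * w a)]
    simp

theorem sum_completeHom_succ_mul (w g : ℕ → R) (d P : ℕ) :
    ∑ c ∈ range P, completeHom w (d + 1) (c + 1) * g c =
      ∑ a ∈ range P, completeHom w d (a + 1) * w a * ∑ c ∈ Ico a P, g c := by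
  simp only [completeHom_succ, sum_mul, mul_sum, range_eq_Ico]
  exact (sum_Ico_Ico_comm 0 P _).symm

def invDist (P a : ℕ) : ℝ := 1 / ((P : ℝ) - a)

theorem invDist_succ_succ (P : ℕ) : (fun a => invDist (P + 1) (a + 1)) = invDist P := by
  funext a
  simp only [invDist]
  push_cast
  ring_nf

theorem invDist_succ_zero (P : ℕ) : invDist (P + 1) 0 = 1 / ((P : ℝ) + 1) := by
  simp [invDist]

def kawashimaTail (P d : ℕ) (x : ℝ) : ℝ :=
  ∑ c ∈ range P, completeHom (invDist P) d (c + 1) / (x + c)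

theorem kawashimaTail_succ_one_sub (P e : ℕ) :
    kawashimaTail (P + 1) e 1 - kawashimaTail P e 1 = 1 / ((P : ℝ) + 1) ^ (e + 1) := by
  induction e with
  | zero => simp [kawashimaTail, sum_range_succ, add_comm]
  | succ e ih =>
    set h := completeHom (invDist P)
    have hsplit : kawashimaTail (P + 1) (e + 1) 1 = 1 / ((P : ℝ) + 1) * kawashimaTail (P + 1) e 1
        + ∑ c ∈ range P, h (e + 1) (c + 1) / ((c : ℝ) + 1 + 1) := by
      simp only [kawashimaTail, completeHom_succ_succ, invDist_succ_succ, invDist_succ_zero,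
        add_div, sum_add_distrib, mul_sum, mul_div_assoc]
      rw [sum_range_succ' (fun c => h (e + 1) c / _)]
      simp only [completeHom_succ_zero, zero_div, add_zero, h]
      congr 1
      refine sum_congr rfl fun c _ => ?_
      push_cast
      ring_nf
    have hswap : ∑ c ∈ range P, h (e + 1) (c + 1) / ((c : ℝ) + 1 + 1) - kawashimaTail P (e + 1) 1
        = -(1 / ((P : ℝ) + 1)) * kawashimaTail P e 1 := by
      unfold kawashimaTail
      rw [← sum_sub_distrib]
      calc _ = ∑ c ∈ range P, h (e + 1) (c + 1) * (1 / ((c : ℝ) + 1 + 1) - 1 / ((c : ℝ) + 1)) :=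
            sum_congr rfl fun c _ => by ring
        _ = ∑ a ∈ range P, h e (a + 1) * invDist P a *
              ∑ c ∈ Ico a P, (1 / ((c : ℝ) + 1 + 1) - 1 / ((c : ℝ) + 1)) :=
            sum_completeHom_succ_mul _ _ _ _
        _ = ∑ a ∈ range P, h e (a + 1) * invDist P a * (1 / ((P : ℝ) + 1) - 1 / ((a : ℝ) + 1)) := by
            refine sum_congr rfl fun a ha => ?_
            have := sum_Ico_sub (fun c : ℕ => 1 / ((c : ℝ) + 1)) (mem_range.1 ha).le
            push_cast at this
            rw [this]
        _ = _ := by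
            rw [mul_sum]
            refine sum_congr rfl fun a ha => ?_
            have hPa : (P : ℝ) - a ≠ 0 := sub_ne_zero.2 (by exact_mod_cast (mem_range.1 ha).ne')
            simp only [invDist]
            field_simp
            ring
    calc _ = 1 / ((P : ℝ) + 1) * (kawashimaTail (P + 1) e 1 - kawashimaTail P e 1) := by
          rw [hsplit]; linear_combination hswap
      _ = _ := by rw [ih, one_div_mul_one_div, ← pow_succ']

theorem kawashimaTail_one (P e : ℕ) :
    kawashimaTail P e 1 = ∑ m ∈ Icc 1 P, 1 / (m : ℝ) ^ (e + 1) := by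
  induction P with
  | zero => simp [kawashimaTail]
  | succ P ih =>
    rw [sum_Icc_succ_top (by omega), ← ih]
    push_cast
    rw [← kawashimaTail_succ_one_sub]
    ring

theorem hasSum_one_div_sub_one_div_succ {x : ℝ} (hx : 0 < x) :
    HasSum (fun j : ℕ => 1 / (x + j) - 1 / (x + j + 1)) (1 / x) := by
  have hpartial (n : ℕ) : ∑ j ∈ range n, (1 / (x + j) - 1 / (x + j + 1)) = 1 / x - 1 / (x + n) := by
    simpa [add_assoc] using sum_range_sub' (fun j : ℕ => 1 / (x + j)) n
  have hlim : Tendsto (fun n : ℕ => 1 / (x + n)) atTop (𝓝 0) :=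
    tendsto_const_nhds.div_atTop (tendsto_atTop_add_const_left _ x tendsto_natCast_atTop_atTop)
  rw [hasSum_iff_tendsto_nat_of_nonneg fun j => sub_nonneg.2 <|
    one_div_le_one_div_of_le (by positivity) (by linarith), funext hpartial]
  simpa using tendsto_const_nhds.sub hlim

theorem hasSum_one_div_sub_one_div {x : ℝ} (hx : 0 < x) {a b : ℕ} (hab : a ≤ b) :
    HasSum (fun j : ℕ => 1 / (x + j + a) - 1 / (x + j + b)) (∑ c ∈ Ico a b, 1 / (x + c)) := by
  have hstep (c : ℕ) : HasSum (fun j : ℕ => 1 / (x + j + c) - 1 / (x + j + (c + 1 : ℕ)))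
      (1 / (x + c)) := by
    convert hasSum_one_div_sub_one_div_succ (x := x + c) (by positivity) using 2 with j
    push_cast
    ring_nf
  convert hasSum_sum fun c (_ : c ∈ Ico a b) => hstep c using 1
  funext j
  rw [← neg_sub, ← sum_Ico_sub (fun c : ℕ => 1 / (x + j + c)) hab, ← sum_neg_distrib]
  simp only [neg_sub]

theorem hasSum_kawashimaTail_zero (P : ℕ) {x : ℝ} (hx : 0 < x) :
    HasSum (fun j : ℕ => 1 / (x + j) - 1 / (x + j + P)) (kawashimaTail P 0 x) := by
  have := hasSum_one_div_sub_one_div hx (Nat.zero_le P)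
  rw [← range_eq_Ico] at this
  simpa [kawashimaTail] using this

theorem hasSum_kawashimaTail_succ (P d : ℕ) {x : ℝ} (hx : 0 < x) :
    HasSum (fun j : ℕ => 1 / (x + j + P) * kawashimaTail P d (x + j))
      (kawashimaTail P (d + 1) x) := by
  have hfrac : (fun j : ℕ => 1 / (x + j + P) * kawashimaTail P d (x + j)) =
      fun j : ℕ => ∑ c ∈ range P, completeHom (invDist P) d (c + 1) * invDist P c *
        (1 / (x + j + c) - 1 / (x + j + P)) := by
    funext j
    rw [kawashimaTail, mul_sum]
    refine sum_congr rfl fun c hc => ?_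
    have hPc : (P : ℝ) - c ≠ 0 := sub_ne_zero.2 (by exact_mod_cast (mem_range.1 hc).ne')
    have : 0 < x + j + c := by positivity
    have : 0 < x + j + P := by positivity
    simp only [invDist]
    field_simp
    ring
  have hswap : kawashimaTail P (d + 1) x = ∑ a ∈ range P,
      completeHom (invDist P) d (a + 1) * invDist P a * ∑ c ∈ Ico a P, 1 / (x + c) := by
    rw [← sum_completeHom_succ_mul]
    exact sum_congr rfl fun c _ => div_eq_mul_one_div _ _
  rw [hfrac, hswap]
  exact hasSum_sum fun c hc => (hasSum_one_div_sub_one_div hx (mem_range.1 hc).le).mul_left _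

theorem hasSum_sigma_of_nonneg {β : Type*} {γ : β → Type*} {f : (Σ b, γ b) → ℝ} {g : β → ℝ}
    {a : ℝ} (hf : ∀ x, 0 ≤ f x) (hfg : ∀ b, HasSum (fun c => f ⟨b, c⟩) (g b)) (hg : HasSum g a) :
    HasSum f a :=
  hg.sigma_of_hasSum hfg <| (summable_sigma_of_nonneg hf).2
    ⟨fun b => (hfg b).summable, by simpa only [fun b => (hfg b).tsum_eq] using hg.summable⟩

abbrev ChainAbove (k n : ℕ) : Type :=
  {m : Fin k → ℕ // (∀ i j : Fin k, i ≤ j → m i ≤ m j) ∧ ∀ i, n < m i}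

def ChainAbove.singletonEquiv (n : ℕ) : ℕ ≃ ChainAbove 1 n where
  toFun j := ⟨fun _ => n + j + 1, fun _ _ _ => le_rfl, fun _ => show n < n + j + 1 by omega⟩
  invFun m := m.1 0 - n - 1
  left_inv j := show n + j + 1 - n - 1 = j by omega
  right_inv m := Subtype.ext <| funext fun i => show n + (m.1 0 - n - 1) + 1 = m.1 i by
    have := m.2.2 0
    rw [Subsingleton.elim i 0]
    omega

theorem ChainAbove.singletonEquiv_apply_coe (n j : ℕ) (i : Fin 1) :
    (singletonEquiv n j).1 i = n + j + 1 := rfl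

def ChainAbove.consEquiv (d n : ℕ) :
    (Σ j : ℕ, ChainAbove (d + 1) (n + j)) ≃ ChainAbove (d + 2) n where
  toFun x := ⟨Fin.cons (n + x.1 + 1) x.2.1, monotone_vecCons.2 ⟨x.2.2.2 0, x.2.2.1⟩,
    Fin.cases (show n < n + x.1 + 1 by omega) fun i => (Nat.le_add_right _ _).trans_lt (x.2.2.2 i)⟩
  invFun m := ⟨m.1 0 - n - 1, Fin.tail m.1,
    fun i j hij => m.2.1 i.succ j.succ (Fin.succ_le_succ_iff.2 hij), fun i =>
      show n + (m.1 0 - n - 1) < m.1 i.succ by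
        have := m.2.1 0 i.succ (Fin.zero_le _)
        have := m.2.2 0
        omega⟩
  left_inv x := Sigma.subtype_ext (show n + x.1 + 1 - n - 1 = x.1 by omega) (by simp)
  right_inv m := Subtype.ext <| show Fin.cons (n + (m.1 0 - n - 1) + 1) (Fin.tail m.1) = m.1 by
    have := m.2.2 0
    rw [show n + (m.1 0 - n - 1) + 1 = m.1 0 by omega, Fin.cons_self_tail]

theorem ChainAbove.consEquiv_apply_coe (d n : ℕ) (x : Σ j : ℕ, ChainAbove (d + 1) (n + j)) :
    (consEquiv d n x).1 = Fin.cons (n + x.1 + 1) x.2.1 := rfl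

def kawashimaTerm (P d : ℕ) (m : Fin (d + 1) → ℕ) : ℝ :=
  (∏ j : Fin d, 1 / ((m j.castSucc : ℝ) + P)) *
    (1 / (m (Fin.last d) : ℝ) - 1 / ((m (Fin.last d) : ℝ) + P))

theorem kawashimaTerm_cons (P d a : ℕ) (m : Fin (d + 1) → ℕ) :
    kawashimaTerm P (d + 1) (Fin.cons a m) = 1 / ((a : ℝ) + P) * kawashimaTerm P d m := by
  simp only [kawashimaTerm, Fin.prod_univ_succ, Fin.castSucc_zero, Fin.cons_zero,
    ← Fin.succ_castSucc, Fin.cons_succ, ← Fin.succ_last]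
  ring

theorem kawashimaTerm_nonneg (P d : ℕ) {m : Fin (d + 1) → ℕ} (hm : 0 < m (Fin.last d)) :
    0 ≤ kawashimaTerm P d m :=
  mul_nonneg (prod_nonneg fun _ _ => by positivity) <| sub_nonneg.2 <|
    one_div_le_one_div_of_le (by exact_mod_cast hm) (by linarith [(P.cast_nonneg : (0 : ℝ) ≤ P)])

theorem hasSum_kawashimaTerm (P d n : ℕ) :
    HasSum (fun m : ChainAbove (d + 1) n => kawashimaTerm P d m.1)
      (kawashimaTail P d (n + 1)) := by
  induction d generalizing n with
  | zero =>
    rw [← (ChainAbove.singletonEquiv n).hasSum_iff]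
    convert hasSum_kawashimaTail_zero P (x := n + 1) (by positivity) using 2 with j
    simp only [Function.comp_apply, kawashimaTerm, ChainAbove.singletonEquiv_apply_coe]
    push_cast
    ring
  | succ d ih =>
    rw [← (ChainAbove.consEquiv d n).hasSum_iff]
    refine hasSum_sigma_of_nonneg (fun x => kawashimaTerm_nonneg P _ <|
        (Nat.zero_le n).trans_lt (((ChainAbove.consEquiv d n) x).2.2 _)) (fun j => ?_)
      (hasSum_kawashimaTail_succ P d (x := n + 1) (by positivity))
    rw [show (n : ℝ) + 1 + j = ((n + j : ℕ) : ℝ) + 1 by push_cast; ring]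
    simp only [Function.comp_apply, ChainAbove.consEquiv_apply_coe, kawashimaTerm_cons,
      Nat.cast_succ]
    exact (ih (n + j)).mul_left _

end

/-- The depth-one case `G_{(k)}(N-1) = ζ⋆_{<N}(k)` of Kawashima's identity: for `k ≥ 2`,
the series `∑_{0<m₁≤⋯≤m_k} [∏_{j=1}^{k-1} 1/(m_j+N-1)]·(1/m_k − 1/(m_k+N-1))` converges
to `∑_{0<m<N} 1/m^k`. -/
theorem kawashima_depth_one (N k : ℕ) (hN : 0 < N) (hk : 2 ≤ k) :
    HasSum
      (fun m : {m : Fin k → ℕ // (∀ i j : Fin k, i ≤ j → m i ≤ m j) ∧ ∀ i, 0 < m i} =>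
        (∏ j ∈ Finset.univ.filter (fun j : Fin k => (j : ℕ) < k - 1),
            (1 : ℝ) / ((m.1 j : ℝ) + (N : ℝ) - 1)) *
          (1 / (m.1 ⟨k - 1, by omega⟩ : ℝ) -
            1 / ((m.1 ⟨k - 1, by omega⟩ : ℝ) + (N : ℝ) - 1)))
      (∑ m ∈ Finset.Ioo 0 N, (1 : ℝ) / (m : ℝ) ^ k) := by
  obtain ⟨P, rfl⟩ : ∃ P, N = P + 1 := ⟨N - 1, by omega⟩
  obtain ⟨d, rfl⟩ : ∃ d, k = d + 1 := ⟨k - 1, by omega⟩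
  have h := hasSum_kawashimaTerm P d 0
  rw [Nat.cast_zero, zero_add, kawashimaTail_one] at h
  convert h using 1
  · funext m
    simp [kawashimaTerm, prod_filter, Fin.prod_univ_castSucc, Fin.last, ← add_assoc]
  · rfl
end

section
/- For any positive integers N, m', n', n'' with n' ≤ n'' ≤ N-1, the identity (1/(m'+N-1))·∑_{m=m'}^∞ (1/(m+N-1-n'') − 1/(m+N-n')) = ∑_{n=n'}^{n''} (1/(m'+N-1-n) − 1/(m'+N-1))·(1/n) holds, with all series convergent. -/
lemma hasSum_telescope_aux (x : ℝ) (hx : 0 < x) :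
    HasSum (fun j : ℕ => 1 / (x + j) - 1 / (x + j + 1)) (1 / x) := by
  have hnn : ∀ j : ℕ, 0 ≤ 1 / (x + j) - 1 / (x + j + 1) := by
    intro j
    have h1 : (0:ℝ) < x + j := by positivity
    have := one_div_le_one_div_of_le h1 (by linarith : x + j ≤ x + j + 1)
    linarith
  rw [hasSum_iff_tendsto_nat_of_nonneg hnn]
  have hsum : ∀ n : ℕ, ∑ j ∈ Finset.range n, (1 / (x + j) - 1 / (x + j + 1))
      = 1 / x - 1 / (x + n) := by
    intro n
    have := Finset.sum_range_sub' (fun j : ℕ => 1 / (x + j)) n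
    push_cast at this
    simpa [add_assoc] using this
  simp only [hsum]
  have h0 : Filter.Tendsto (fun n : ℕ => 1 / (x + n)) Filter.atTop (nhds 0) := by
    simp only [one_div]
    apply Filter.Tendsto.inv_tendsto_atTop
    exact Filter.tendsto_atTop_add_const_left _ x tendsto_natCast_atTop_atTop
  have := Filter.Tendsto.sub (tendsto_const_nhds (x := 1 / x) (f := Filter.atTop)) h0
  simpa using this

lemma sum_Icc_telescope_aux (G : ℕ → ℝ) (a b : ℕ) (h : a ≤ b) :
    ∑ n ∈ Finset.Icc a b, (G (n + 1) - G n) = G (b + 1) - G a := by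
  induction b with
  | zero => interval_cases a; simp
  | succ k ih =>
    rcases Nat.lt_or_ge k a with hlt | hle
    · have : a = k + 1 := by omega
      subst this; simp
    · rw [Finset.sum_Icc_succ_top (show a ≤ k + 1 by omega), ih hle]
      ring

/-- Transformation (5.2): for positive integers `N, m', n', n''` with `n' ≤ n'' ≤ N-1`,
the series `(1/(m'+N-1))·∑_{m=m'}^∞ (1/(m+N-1-n'') − 1/(m+N-n'))` converges to
`∑_{n=n'}^{n''} (1/(m'+N-1-n) − 1/(m'+N-1))·(1/n)`. -/
theorem kawashima_transformation_1 (N m' n' n'' : ℕ)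
    (hN : 0 < N) (hm' : 0 < m') (hn' : 0 < n') (h1 : n' ≤ n'') (h2 : n'' ≤ N - 1) :
    HasSum
      (fun j : ℕ =>
        (1 / ((m' : ℝ) + (N : ℝ) - 1)) *
          (1 / ((m' : ℝ) + (j : ℝ) + (N : ℝ) - 1 - (n'' : ℝ)) -
            1 / ((m' : ℝ) + (j : ℝ) + (N : ℝ) - (n' : ℝ))))
      (∑ n ∈ Finset.Icc n' n'',
        (1 / ((m' : ℝ) + (N : ℝ) - 1 - (n : ℝ)) - 1 / ((m' : ℝ) + (N : ℝ) - 1)) *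
          (1 / (n : ℝ))) := by
  set b : ℝ := (m' : ℝ) + (N : ℝ) - 1 with hb
  have hm1 : (1:ℝ) ≤ (m' : ℝ) := by exact_mod_cast hm'
  have hN1 : (1:ℝ) ≤ (N : ℝ) := by exact_mod_cast hN
  have hbpos : 0 < b := by rw [hb]; linarith
  -- positivity for each n in the interval
  have hpos : ∀ n ∈ Finset.Icc n' n'', 0 < b - (n : ℝ) := by
    intro n hn
    rw [Finset.mem_Icc] at hn
    have hnN : n + 1 ≤ N := by omega
    have : (n : ℝ) + 1 ≤ (N : ℝ) := by exact_mod_cast hnN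
    rw [hb]; linarith
  -- each summand has a telescoping sum
  have hterm : ∀ n ∈ Finset.Icc n' n'',
      HasSum (fun j : ℕ => (1 / b) * (1 / ((b - n) + j) - 1 / ((b - n) + j + 1)))
        ((1 / b) * (1 / (b - n))) := by
    intro n hn
    exact (hasSum_telescope_aux (b - n) (hpos n hn)).mul_left _
  have hS := hasSum_sum hterm
  -- identify the function
  have hfun : (fun j : ℕ => ∑ n ∈ Finset.Icc n' n'',
        (1 / b) * (1 / ((b - n) + j) - 1 / ((b - n) + j + 1)))
      = (fun j : ℕ =>
        (1 / ((m' : ℝ) + (N : ℝ) - 1)) *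
          (1 / ((m' : ℝ) + (j : ℝ) + (N : ℝ) - 1 - (n'' : ℝ)) -
            1 / ((m' : ℝ) + (j : ℝ) + (N : ℝ) - (n' : ℝ)))) := by
    funext j
    rw [← Finset.mul_sum]
    have htel := sum_Icc_telescope_aux (fun n : ℕ => 1 / (b + j + 1 - n)) n' n'' h1
    have hcongr : ∑ n ∈ Finset.Icc n' n'',
        ((fun n : ℕ => 1 / (b + j + 1 - n)) (n + 1) - (fun n : ℕ => 1 / (b + j + 1 - n)) n)
        = ∑ n ∈ Finset.Icc n' n'', (1 / ((b - n) + j) - 1 / ((b - n) + j + 1)) := by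
      apply Finset.sum_congr rfl
      intro n _
      push_cast
      ring_nf
    rw [← hcongr, htel, hb]
    push_cast
    ring_nf
  rw [hfun] at hS
  -- identify the value
  have hval : (∑ n ∈ Finset.Icc n' n'', (1 / b) * (1 / (b - n)))
      = ∑ n ∈ Finset.Icc n' n'',
        (1 / ((m' : ℝ) + (N : ℝ) - 1 - (n : ℝ)) - 1 / ((m' : ℝ) + (N : ℝ) - 1)) *
          (1 / (n : ℝ)) := by
    apply Finset.sum_congr rfl
    intro n hn
    have hbn := hpos n hn
    have hn1 : 0 < (n : ℝ) := by
      rw [Finset.mem_Icc] at hn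
      exact_mod_cast (by omega : 0 < n)
    rw [← hb]
    field_simp
    ring
  rw [hval] at hS
  exact hS
end
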